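/- A morphism f : X → Y of S-schemes is quasi-compact (respectively quasi-separated) as a morphism of schemes if and only if the induced morphism between the functors represented by X and Y is quasi-compact (respectively quasi-separated) in the functor sense. -/

import Mathlib

/-!
Quasi-compactness of a morphism of schemes can be tested by pulling back along morphisms from
quasi-compact schemes. On a representable functor, functorial quasi-compactness is topological
quasi-compactness: a surjection of functors between representables is surjective on underlying
points, as one sees by evaluating it on the spectra of residue fields. The Yoneda embedding and
the forgetful functor from `S`-schemes to schemes preserve fibre products, so the two notions of
quasi-compact morphism agree; for quasi-separatedness apply this to the diagonal, which both
functors also preserve.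
-/

open CategoryTheory CategoryTheory.Limits AlgebraicGeometry Opposite

universe u

/-- The category of contravariant set-valued functors on `S`-schemes. -/
abbrev SFunctor (S : Scheme.{u}) := (Over S)ᵒᵖ ⥤ Type u

/-- A field extension of a field `K` : a field `L` together with a ring
homomorphism (necessarily injective) `K →+* L`. -/
structure FieldExt (K : Type u) [Field K] : Type (u + 1) where
  carrier : Type u
  [fieldInst : Field carrier]
  emb : K →+* carrier

attribute [instance] FieldExt.fieldInst

variable {S : Scheme.{u}}

/-- A morphism of functors `u : F ⟶ G` is surjective if for every field `K`,
every morphism `Spec K → S` and every `ξ ∈ G(Spec K)`, there is a field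
extension `L` of `K` such that the restriction of `ξ` to `G(Spec L)` lies in
the image of `F(Spec L) → G(Spec L)`. -/
def IsSurjectiveMor {F G : SFunctor S} (u : F ⟶ G) : Prop :=
  ∀ (K : Type u) [Field K] (s : Spec (CommRingCat.of K) ⟶ S)
    (ξ : G.obj (op (Over.mk s))),
    ∃ (L : FieldExt K)
      (η : F.obj (op (Over.mk (Spec.map (CommRingCat.ofHom L.emb) ≫ s)))),
      u.app _ η =
        G.map ((Over.homMk (Spec.map (CommRingCat.ofHom L.emb)) rfl :
          Over.mk (Spec.map (CommRingCat.ofHom L.emb) ≫ s) ⟶ Over.mk s)).op ξ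

/-- A functor on `S`-schemes is quasi-compact if it admits a surjective
morphism from (the functor represented by) a quasi-compact `S`-scheme. -/
def QCFunctor (F : SFunctor S) : Prop :=
  ∃ (T : Over S) (u : yoneda.obj T ⟶ F), CompactSpace T.left ∧ IsSurjectiveMor u

/-- A morphism of functors `F ⟶ G` is quasi-compact if for every quasi-compact
`S`-scheme `T` and every morphism `T → G`, the fiber product `F ×_G T` is a
quasi-compact functor. -/
def QCMor {F G : SFunctor S} (u : F ⟶ G) : Prop :=
  ∀ (T : Over S), CompactSpace T.left →
    ∀ v : yoneda.obj T ⟶ G, QCFunctor (pullback u v)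

/-- A morphism of functors `F ⟶ G` is quasi-separated if its diagonal
`F ⟶ F ×_G F` is quasi-compact. -/
def QSMor {F G : SFunctor S} (u : F ⟶ G) : Prop :=
  QCMor (pullback.diagonal u)

lemma CategoryTheory.Functor.map_diagonal_comp_preservesPullbackIso_hom {C D : Type*}
    [Category C] [Category D] (G : C ⥤ D) {X Y : C} (f : X ⟶ Y) [HasPullback f f]
    [HasPullback (G.map f) (G.map f)] [PreservesLimit (cospan f f) G] :
    G.map (pullback.diagonal f) ≫ (PreservesPullback.iso G f f).hom
      = pullback.diagonal (G.map f) := by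
  apply pullback.hom_ext <;> simp [← G.map_comp]

lemma quasiCompact_comp_iso_iff {X Y Z : Scheme.{u}} (f : X ⟶ Y) (e : Y ≅ Z) :
    QuasiCompact (f ≫ e.hom) ↔ QuasiCompact f :=
  ⟨fun _ => by simpa using (inferInstance : QuasiCompact ((f ≫ e.hom) ≫ e.inv)),
    fun _ => inferInstance⟩

lemma quasiCompact_iff_forall_compactSpace_pullback {X Y : Scheme.{u}} (f : X ⟶ Y) :
    QuasiCompact f ↔
      ∀ (T : Scheme.{u}) (g : T ⟶ Y), CompactSpace T → CompactSpace ↑(pullback f g) := by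
  refine ⟨fun _ T g _ => inferInstance, fun H => ?_⟩
  rw [quasiCompact_iff_forall_isAffineOpen]
  intro U hU
  have : CompactSpace ↑(pullback f U.ι) := H U U.ι (isCompact_iff_compactSpace.mp hU.isCompact)
  rw [isCompact_iff_compactSpace]
  exact (Scheme.homeoOfIso (pullbackRestrictIsoRestrict f U)).compactSpace

lemma IsSurjectiveMor.of_isIso {F G : SFunctor S} (u : F ⟶ G) [IsIso u] :
    IsSurjectiveMor u := by
  intro K _ s ξ
  let L : FieldExt K := ⟨K, RingHom.id K⟩
  let ξL := G.map (Over.homMk (Spec.map (CommRingCat.ofHom L.emb)) rfl :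
    Over.mk (Spec.map (CommRingCat.ofHom L.emb) ≫ s) ⟶ Over.mk s).op ξ
  exact ⟨L, (inv u).app _ ξL, by simp [ξL]⟩

lemma IsSurjectiveMor.comp_iso {F G G' : SFunctor S} {u : F ⟶ G} (hu : IsSurjectiveMor u)
    (e : G ≅ G') : IsSurjectiveMor (u ≫ e.hom) := by
  intro K _ s ξ
  obtain ⟨L, η, hη⟩ := hu K s (e.inv.app _ ξ)
  refine ⟨L, η, ?_⟩
  rw [NatTrans.comp_app, types_comp_apply, hη, ← NatTrans.naturality_apply,
    Iso.inv_hom_id_app_apply]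

lemma QCFunctor.of_iso {F G : SFunctor S} (e : F ≅ G) (h : QCFunctor F) : QCFunctor G :=
  let ⟨T, w, hT, hw⟩ := h
  ⟨T, w ≫ e.hom, hT, hw.comp_iso e⟩

lemma qcFunctor_iff_of_iso {F G : SFunctor S} (e : F ≅ G) : QCFunctor F ↔ QCFunctor G :=
  ⟨.of_iso e, .of_iso e.symm⟩

lemma QCMor.comp_iso {F G G' : SFunctor S} {u : F ⟶ G} (hu : QCMor u) (e : G ≅ G') :
    QCMor (u ≫ e.hom) := fun T hT v =>
  (hu T hT (v ≫ e.inv)).of_iso <| asIso <|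
    pullback.map u (v ≫ e.inv) (u ≫ e.hom) v (𝟙 _) (𝟙 _) e.hom (by simp) (by simp)

lemma qcMor_comp_iso_iff {F G G' : SFunctor S} (u : F ⟶ G) (e : G ≅ G') :
    QCMor (u ≫ e.hom) ↔ QCMor u :=
  ⟨fun h => by simpa using h.comp_iso e.symm, fun h => h.comp_iso e⟩

lemma IsSurjectiveMor.surjective_of_yoneda {T Z : Over S} {g : T ⟶ Z}
    (hg : IsSurjectiveMor (yoneda.map g)) : Function.Surjective g.left := by
  intro z
  obtain ⟨L, η, hη⟩ := hg (Z.left.residueField z) (Z.left.fromSpecResidueField z ≫ Z.hom)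
    (Over.homMk (Z.left.fromSpecResidueField z) rfl)
  have hfac : η.left ≫ g.left =
      Spec.map (CommRingCat.ofHom L.emb) ≫ Z.left.fromSpecResidueField z := by
    simpa using congrArg CommaMorphism.left hη
  -- any point of `Spec L` lies over the unique point of `Spec κ(z)`
  let p : PrimeSpectrum L.carrier := ⟨⊥, Ideal.isPrime_bot⟩
  refine ⟨η.left.base p, (congrArg (fun q => q.base p) hfac).trans ?_⟩
  exact Z.left.fromSpecResidueField_apply z _

lemma qcFunctor_yoneda_iff (Z : Over S) : QCFunctor (yoneda.obj Z) ↔ CompactSpace Z.left := by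
  refine ⟨fun ⟨T, w, hT, hw⟩ => ?_, fun h => ⟨Z, 𝟙 _, h, .of_isIso _⟩⟩
  obtain ⟨g, rfl⟩ := yoneda.map_surjective w
  exact ⟨hw.surjective_of_yoneda.range_eq ▸ isCompact_range g.left.continuous⟩

lemma qcFunctor_pullback_yoneda_iff {A B T : Over S} (h : A ⟶ B) (g : T ⟶ B) :
    QCFunctor (pullback (yoneda.map h) (yoneda.map g)) ↔
      CompactSpace ↑(pullback h.left g.left) := by
  rw [← qcFunctor_iff_of_iso (PreservesPullback.iso yoneda h g), qcFunctor_yoneda_iff]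
  have e := Scheme.homeoOfIso (PreservesPullback.iso (Over.forget S) h g)
  exact ⟨fun hc => @Homeomorph.compactSpace _ _ _ _ hc e,
    fun hc => @Homeomorph.compactSpace _ _ _ _ hc e.symm⟩

lemma quasiCompact_left_iff_qcMor {A B : Over S} (h : A ⟶ B) :
    QuasiCompact h.left ↔ QCMor (yoneda.map h) := by
  simp only [QCMor, quasiCompact_iff_forall_compactSpace_pullback]
  refine ⟨fun H T hT v => ?_, fun H T g hT => ?_⟩
  · obtain ⟨g, rfl⟩ := yoneda.map_surjective v
    exact (qcFunctor_pullback_yoneda_iff h g).2 (H T.left g.left hT)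
  · exact (qcFunctor_pullback_yoneda_iff h (Over.homMk g rfl : Over.mk (g ≫ B.hom) ⟶ B)).1
      (H _ hT _)

lemma quasiSeparated_left_iff_qsMor {A B : Over S} (h : A ⟶ B) :
    QuasiSeparated h.left ↔ QSMor (yoneda.map h) := by
  have hdiag : QuasiCompact (pullback.diagonal ((Over.forget S).map h)) ↔
      QCMor (pullback.diagonal (yoneda.map h)) := by
    rw [← yoneda.map_diagonal_comp_preservesPullbackIso_hom h, qcMor_comp_iso_iff,
      ← (Over.forget S).map_diagonal_comp_preservesPullbackIso_hom h,
      quasiCompact_comp_iso_iff]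
    exact quasiCompact_left_iff_qcMor _
  exact ⟨fun hqs => hdiag.1 hqs.quasiCompact_diagonal, fun H => ⟨hdiag.2 H⟩⟩

/-- A morphism `f : X ⟶ Y` of `S`-schemes is quasi-compact (resp.
quasi-separated) as a morphism of schemes iff the induced morphism of
represented functors is quasi-compact (resp. quasi-separated). -/
theorem quasiCompact_quasiSeparated_iff_functor {S : Scheme.{u}} {X Y : Over S} (f : X ⟶ Y) :
    (QuasiCompact f.left ↔ QCMor (yoneda.map f)) ∧
    (QuasiSeparated f.left ↔ QSMor (yoneda.map f)) :=
  ⟨quasiCompact_left_iff_qcMor f, quasiSeparated_left_iff_qsMor f⟩
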